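/- arXiv:1710.09207 — 2 statements merged into one kernel-verified Lean document; each statement's English description precedes it below -/
import Mathlib

section
/- For any fixed real x, the map τ ↦ S_τ(x) = (1/τ)·log(1 + e^{τx}) is strictly decreasing on (0, ∞). -/
/-!
`S_τ(x)` is the logarithm of the `ℓ^τ`-norm of the vector `(1, eˣ)`, and `ℓ^τ`-norms of a vector
with two nonzero entries strictly decrease in `τ`. This comes from strict superadditivity of
`t ↦ t ^ r` for `r > 1`: `a ^ r = a · a ^ (r - 1) < a · (a + b) ^ (r - 1)`, and likewise for `b`.
-/

namespace Real

lemma add_rpow_lt_rpow_add {p a b : ℝ} (ha : 0 < a) (hb : 0 < b) (hp : 1 < p) :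
    a ^ p + b ^ p < (a + b) ^ p := by
  have hab : 0 < a + b := add_pos ha hb
  have hp1 : 1 + (p - 1) ≠ 0 := by linarith
  have hsummand : ∀ c : ℝ, 0 < c → c < a + b → c ^ p < c * (a + b) ^ (p - 1) := fun c hc hcab =>
    calc c ^ p = c * c ^ (p - 1) := by rw [← rpow_one_add' hc.le hp1, add_sub_cancel]
      _ < c * (a + b) ^ (p - 1) := by gcongr
  calc a ^ p + b ^ p < a * (a + b) ^ (p - 1) + b * (a + b) ^ (p - 1) :=
        add_lt_add (hsummand a ha (by linarith)) (hsummand b hb (by linarith))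
    _ = (a + b) ^ p := by rw [← add_mul, ← rpow_one_add' hab.le hp1, add_sub_cancel]

lemma rpow_add_rpow_lt {p q a b : ℝ} (ha : 0 < a) (hb : 0 < b) (hp : 0 < p) (hpq : p < q) :
    (a ^ q + b ^ q) ^ (1 / q) < (a ^ p + b ^ p) ^ (1 / p) := by
  have hq : 0 < q := hp.trans hpq
  have hpow : ∀ c : ℝ, 0 < c → c ^ q = (c ^ p) ^ (q / p) := fun c hc => by
    rw [← rpow_mul hc.le, mul_div_cancel₀ q hp.ne']
  have hsuper : (a ^ p) ^ (q / p) + (b ^ p) ^ (q / p) < (a ^ p + b ^ p) ^ (q / p) :=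
    add_rpow_lt_rpow_add (by positivity) (by positivity) ((one_lt_div hp).mpr hpq)
  calc (a ^ q + b ^ q) ^ (1 / q) < ((a ^ p + b ^ p) ^ (q / p)) ^ (1 / q) := by
        rw [hpow a ha, hpow b hb]; gcongr
    _ = (a ^ p + b ^ p) ^ (1 / p) := by
        rw [← rpow_mul (by positivity)]; congr 1; field_simp

end Real

theorem softplus_strictAnti_in_tau (x : ℝ) :
    StrictAntiOn (fun τ : ℝ => (1 / τ) * Real.log (1 + Real.exp (τ * x))) (Set.Ioi 0) := by
  intro σ hσ τ _ hστ
  have hnorm := Real.rpow_add_rpow_lt one_pos (Real.exp_pos x) hσ hστ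
  simp only [Real.one_rpow, ← Real.exp_mul, mul_comm x] at hnorm
  have hlog := Real.log_lt_log (by positivity) hnorm
  rwa [Real.log_rpow (by positivity), Real.log_rpow (by positivity)] at hlog
end

section
/- Fix h_1,…,h_n ∈ ℝ^m, λ > 0, τ > 0, and R ∈ ℝ. The SVDD smooth objective c ↦ F_τ(c, R) = R² + (1/(nλ))·Σ_{i=1}^n S_τ(‖h_i − c‖² − R²) is strictly convex in c whenever its Hessian Σ_i [2I(Ω_i + Ω_i²) + 4τΩ_i(c−h_i)(c−h_i)ᵀ]/(nλ(1+Ω_i)²) is positive definite, where Ω_i = e^{τ(‖h_i−c‖²−R²)}; in particular this Hessian is positive definite for every c ∈ ℝ^m. -/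
/-!
Each summand is `S_τ ∘ q_i` with `q_i c = ‖h_i - c‖² - R²`. The squared distance `q_i` is
strictly convex, and `S_τ` is convex (its derivative, the logistic function, is increasing)
and strictly increasing, so the composite is strictly convex; a positive multiple of a nonempty
sum of strictly convex functions plus a constant stays strictly convex. The Hessian is positive
definite because each summand is a positive multiple of the identity plus a positive semidefinite
rank-one matrix.
-/

open Matrix Set

section Convexity

variable {𝕜 E β γ ι : Type*} [Semiring 𝕜] [PartialOrder 𝕜] [AddCommMonoid E]
  [SMul 𝕜 E]

theorem ConvexOn.comp_strictConvexOn_of_univ [AddCommMonoid β] [PartialOrder β] [SMul 𝕜 β]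
    [AddCommMonoid γ] [PartialOrder γ] [SMul 𝕜 γ] {s : Set E} {f : E → β} {g : β → γ}
    (hg : ConvexOn 𝕜 univ g) (hg' : StrictMono g) (hf : StrictConvexOn 𝕜 s f) :
    StrictConvexOn 𝕜 s (g ∘ f) :=
  ⟨hf.1, fun _ hx _ hy hxy _ _ ha hb hab =>
    (hg' (hf.2 hx hy hxy ha hb hab)).trans_le (hg.2 trivial trivial ha.le hb.le hab)⟩

theorem StrictConvexOn.sum [AddCommMonoid β] [PartialOrder β] [IsOrderedCancelAddMonoid β]
    [DistribMulAction 𝕜 β] {s : Set E} {t : Finset ι} (ht : t.Nonempty) {f : ι → E → β}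
    (hf : ∀ i ∈ t, StrictConvexOn 𝕜 s (f i)) :
    StrictConvexOn 𝕜 s fun x => ∑ i ∈ t, f i x := by
  induction ht using Finset.Nonempty.cons_induction with
  | singleton i => simpa using hf i (Finset.mem_singleton_self i)
  | cons i t _ _ ih =>
    simp only [Finset.sum_cons]
    exact (hf i (Finset.mem_cons_self i t)).add
      (ih fun j hj => hf j (Finset.mem_cons_of_mem hj))

end Convexity

theorem StrictConvexOn.smul {𝕜 E β : Type*} [CommSemiring 𝕜] [PartialOrder 𝕜]
    [AddCommMonoid E] [SMul 𝕜 E] [AddCommMonoid β] [PartialOrder β] [Module 𝕜 β]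
    [PosSMulStrictMono 𝕜 β] {s : Set E} {f : E → β} {c : 𝕜} (hc : 0 < c)
    (hf : StrictConvexOn 𝕜 s f) : StrictConvexOn 𝕜 s fun x => c • f x :=
  ⟨hf.1, fun x hx y hy hxy a b ha hb hab =>
    calc
      c • f (a • x + b • y) < c • (a • f x + b • f y) :=
        smul_lt_smul_of_pos_left (hf.2 hx hy hxy ha hb hab) hc
      _ = a • c • f x + b • c • f y := by rw [smul_add, smul_comm c, smul_comm c]⟩

-- Strictness needs only one coordinate in which the two points differ.
theorem strictConvexOn_univ_sum_apply {ι : Type*} [Fintype ι] {f : ι → ℝ → ℝ}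
    (hf : ∀ j, StrictConvexOn ℝ univ (f j)) :
    StrictConvexOn ℝ univ fun x : ι → ℝ => ∑ j, f j (x j) := by
  refine ⟨convex_univ, fun x _ y _ hxy a b ha hb hab => ?_⟩
  obtain ⟨j, hj⟩ := Function.ne_iff.mp hxy
  simp only [Pi.add_apply, Pi.smul_apply, smul_eq_mul, Finset.mul_sum,
    ← Finset.sum_add_distrib]
  exact Finset.sum_lt_sum (fun k _ => (hf k).convexOn.2 trivial trivial ha.le hb.le hab)
    ⟨j, Finset.mem_univ j, (hf j).2 trivial trivial hj ha hb hab⟩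

theorem strictConvexOn_univ_sub_sq (c : ℝ) : StrictConvexOn ℝ univ fun t => (c - t) ^ 2 := by
  refine ⟨convex_univ, fun x _ y _ hxy a b ha hb hab => ?_⟩
  obtain rfl : b = 1 - a := by linarith
  simp only [smul_eq_mul]
  have hgap : a * (c - x) ^ 2 + (1 - a) * (c - y) ^ 2 - (c - (a * x + (1 - a) * y)) ^ 2
      = a * (1 - a) * (x - y) ^ 2 := by ring
  have : 0 < a * (1 - a) * (x - y) ^ 2 :=
    mul_pos (mul_pos ha hb) (sq_pos_iff.2 (sub_ne_zero.2 hxy))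
  linarith

/-- The function `S_τ`. -/
noncomputable def softplus (τ t : ℝ) : ℝ := 1 / τ * Real.log (1 + Real.exp (τ * t))

theorem hasDerivAt_softplus {τ : ℝ} (hτ : τ ≠ 0) (t : ℝ) :
    HasDerivAt (softplus τ) (Real.exp (τ * t) / (1 + Real.exp (τ * t))) t := by
  have hexp : HasDerivAt (fun s => 1 + Real.exp (τ * s)) (Real.exp (τ * t) * τ) t :=
    ((Real.hasDerivAt_exp _).comp t
      ((hasDerivAt_id t).const_mul τ |>.congr_deriv (mul_one τ))).const_add 1
  refine ((hexp.log (by positivity)).const_mul (1 / τ)).congr_deriv ?_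
  field_simp

theorem strictMono_softplus {τ : ℝ} (hτ : 0 < τ) : StrictMono (softplus τ) :=
  fun a b hab => by
    unfold softplus
    gcongr

theorem strictConvexOn_softplus {τ : ℝ} (hτ : 0 < τ) :
    StrictConvexOn ℝ univ (softplus τ) := by
  refine StrictMono.strictConvexOn_univ_of_deriv
    (continuous_iff_continuousAt.2 fun t => (hasDerivAt_softplus hτ.ne' t).continuousAt) ?_
  rw [funext fun t => (hasDerivAt_softplus hτ.ne' t).deriv]
  intro a b hab
  have hexp : Real.exp (τ * a) < Real.exp (τ * b) := by gcongr
  rw [div_lt_div_iff₀ (by positivity) (by positivity)]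
  linarith

theorem posDef_smul_one_add_smul_vecMulVec {ι : Type*} [Fintype ι] [DecidableEq ι]
    {a b : ℝ} (ha : 0 < a) (hb : 0 ≤ b) (v : ι → ℝ) :
    (a • (1 : Matrix ι ι ℝ) + b • vecMulVec v v).PosDef :=
  (PosDef.one.smul ha).add_posSemidef ((posSemidef_vecMulVec_self_star v).smul hb)

theorem svdd_hessian_posdef_and_strictConvex (m n : ℕ) (hn : 1 ≤ n)
    (h : Fin n → (Fin m → ℝ)) (lam τ R : ℝ) (hlam : 0 < lam) (hτ : 0 < τ) :
    (∀ c : Fin m → ℝ,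
      ((1 / (n * lam)) • ∑ i : Fin n,
        ((1 + Real.exp (τ * ((∑ j, (h i j - c j) ^ 2) - R ^ 2))) ^ 2)⁻¹ •
          ((2 * (Real.exp (τ * ((∑ j, (h i j - c j) ^ 2) - R ^ 2)) +
              Real.exp (τ * ((∑ j, (h i j - c j) ^ 2) - R ^ 2)) ^ 2)) •
                (1 : Matrix (Fin m) (Fin m) ℝ) +
            (4 * τ * Real.exp (τ * ((∑ j, (h i j - c j) ^ 2) - R ^ 2))) •
              Matrix.vecMulVec (c - h i) (c - h i))).PosDef) ∧
    StrictConvexOn ℝ Set.univ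
      (fun c : Fin m → ℝ =>
        R ^ 2 + (1 / (n * lam)) * ∑ i : Fin n,
          (1 / τ) * Real.log
            (1 + Real.exp (τ * ((∑ j, (h i j - c j) ^ 2) - R ^ 2)))) := by
  have : Nonempty (Fin n) := ⟨⟨0, hn⟩⟩
  have hscale : 0 < 1 / (n * lam) := by
    have : (0 : ℝ) < n := by exact_mod_cast hn
    positivity
  refine ⟨fun c => (posDef_sum Finset.univ_nonempty fun i _ => ?_).smul hscale, ?_⟩
  · exact (posDef_smul_one_add_smul_vecMulVec (by positivity) (by positivity) _).smul
      (by positivity)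
  · have hdist (i : Fin n) :
        StrictConvexOn ℝ univ fun c : Fin m → ℝ => ∑ j, (h i j - c j) ^ 2 - R ^ 2 :=
      (strictConvexOn_univ_sum_apply fun j => strictConvexOn_univ_sub_sq (h i j)).sub_concaveOn
        (concaveOn_const _ convex_univ)
    have hterm (i : Fin n) := (strictConvexOn_softplus hτ).convexOn.comp_strictConvexOn_of_univ
      (strictMono_softplus hτ) (hdist i)
    exact (convexOn_const _ convex_univ).add_strictConvexOn
      ((StrictConvexOn.sum Finset.univ_nonempty fun i _ => hterm i).smul hscale)
end
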